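/- arXiv:1408.1166 — 3 statements merged into one kernel-verified Lean document; each statement's English description precedes it below -/
import Mathlib

section
/- Let a, b ∈ ℝ, let z₀ ∈ ℂ with z₀ ≠ 0, let w ∈ ℂ with |w| = 1, and let c > 0. If for every t ≥ 0 one has Re(conj(w)·exp((a + i·b)·t)·z₀) ≥ c·|exp((a + i·b)·t)·z₀|, then b = 0. -/
/-!
Dividing out the radial factor `exp (a t)` leaves the rotation `exp (i b t)`. If `b ≠ 0`, at time
`π / |b|` the rotation is `-1`, so the trajectory passes through a negative multiple of `z₀`;
but the sector `c * ‖z‖ ≤ Re (conj w * z)` with `c > 0` never contains both a nonzero point and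
its opposite.
-/

open Complex

def sector (w : ℂ) (c : ℝ) : Set ℂ :=
  {z | c * ‖z‖ ≤ ((starRingEnd ℂ) w * z).re}

theorem ofReal_mul_mem_sector_iff {w z : ℂ} {c r : ℝ} (hr : 0 < r) :
    (r : ℂ) * z ∈ sector w c ↔ z ∈ sector w c := by
  have hre : ((starRingEnd ℂ) w * ((r : ℂ) * z)).re = r * ((starRingEnd ℂ) w * z).re := by
    rw [mul_left_comm, re_ofReal_mul]
  simp only [sector, Set.mem_ofPred_eq, hre, norm_mul, norm_real, Real.norm_of_nonneg hr.le,
    mul_left_comm c r]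
  exact mul_le_mul_iff_right₀ hr

theorem eq_zero_of_mem_sector_of_neg_mem {w z : ℂ} {c : ℝ} (hc : 0 < c)
    (hz : z ∈ sector w c) (hnz : -z ∈ sector w c) : z = 0 := by
  simp only [sector, Set.mem_ofPred_eq, norm_neg, mul_neg, neg_re] at hz hnz
  have : c * ‖z‖ ≤ 0 := by linarith
  exact norm_eq_zero.mp (le_antisymm (nonpos_of_mul_nonpos_right this hc) (norm_nonneg z))

theorem exp_mul_pi_div_abs {a b : ℝ} (hb : b ≠ 0) :
    exp ((a + b * I) * ↑(Real.pi / |b|)) = -↑(Real.exp (a * (Real.pi / |b|))) := by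
  have hrot : exp (↑(b * (Real.pi / |b|)) * I) = -1 := by
    rcases abs_choice b with hab | hab
    · rw [hab, mul_div_cancel₀ _ hb, exp_pi_mul_I]
    · rw [hab, show b * (Real.pi / -b) = -Real.pi by field_simp, ofReal_neg, neg_mul,
        exp_neg_pi_mul_I]
  have hsplit : (a + b * I) * ↑(Real.pi / |b|) =
      ↑(a * (Real.pi / |b|)) + ↑(b * (Real.pi / |b|)) * I := by
    push_cast
    ring
  rw [hsplit, exp_add, hrot, ofReal_exp, mul_neg_one]

theorem sector_confined_trajectory_is_radial_general
    (a b : ℝ) (z₀ : ℂ) (hz₀ : z₀ ≠ 0) (w : ℂ)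
    (c : ℝ) (hc : 0 < c)
    (hsector : ∀ t : ℝ, 0 ≤ t →
      c * ‖Complex.exp ((a + b * I) * t) * z₀‖ ≤
        ((starRingEnd ℂ) w * (Complex.exp ((a + b * I) * t) * z₀)).re) :
    b = 0 := by
  by_contra hb
  have hstart : z₀ ∈ sector w c := by
    have h := hsector 0 le_rfl
    rwa [ofReal_zero, mul_zero, exp_zero, one_mul] at h
  have hhalf : exp ((a + b * I) * ↑(Real.pi / |b|)) * z₀ ∈ sector w c :=
    hsector _ (div_nonneg Real.pi_pos.le (abs_nonneg b))
  rw [exp_mul_pi_div_abs hb, neg_mul, ← mul_neg,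
    ofReal_mul_mem_sector_iff (Real.exp_pos _)] at hhalf
  exact hz₀ (eq_zero_of_mem_sector_of_neg_mem hc hstart hhalf)

/-- A trajectory `t ↦ exp((a + i b) t) * z₀` of a linear combination of the
focus-focus Hamiltonian vector fields which stays, for all positive times, in a
fixed convex sector `{z | Re (conj w * z) ≥ c * |z|}` (with `|w| = 1`, `c > 0`)
must be radial, i.e. `b = 0`. -/
theorem sector_confined_trajectory_is_radial
    (a b : ℝ) (z₀ : ℂ) (hz₀ : z₀ ≠ 0) (w : ℂ) (hw : ‖w‖ = 1)
    (c : ℝ) (hc : 0 < c)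
    (hsector : ∀ t : ℝ, 0 ≤ t →
      c * ‖Complex.exp ((a + b * I) * t) * z₀‖ ≤
        ((starRingEnd ℂ) w * (Complex.exp ((a + b * I) * t) * z₀)).re) :
    b = 0 :=
  sector_confined_trajectory_is_radial_general a b z₀ hz₀ w c hc hsector
end

section
/- Fix k ∈ ℕ and a ∈ ℝ^k. Define Φ : ℂ × ℂ × ℝ^k × ℝ^k → ℂ × ℂ × ℝ^k × ℝ^k by Φ(z₁, z₂, θ, I) = (exp(−i⟨θ, a⟩)·z₁, exp(−i⟨θ, a⟩)·z₂, θ, I + Im(conj(z₁)·z₂)·a). Then: (1) Φ is smooth; (2) q₁ ∘ Φ = q₁ and q₂ ∘ Φ = q₂, where q₁, q₂ are regarded as functions of the first two coordinates; (3) Φ is a symplectomorphism for ω = ω^f ⊕ ω^x: for every point p and all tangent vectors u, v, ω(DΦ(p)u, DΦ(p)v) = ω(u, v), where DΦ(p) is the Fréchet derivative of Φ at p. -/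
open scoped BigOperators

/-- The focus-focus component `q₁(z₁, z₂) = Re (conj z₁ * z₂)`. -/
noncomputable def q1FF (z₁ z₂ : ℂ) : ℝ := ((starRingEnd ℂ) z₁ * z₂).re

/-- The focus-focus component `q₂(z₁, z₂) = Im (conj z₁ * z₂)`. -/
noncomputable def q2FF (z₁ z₂ : ℂ) : ℝ := ((starRingEnd ℂ) z₁ * z₂).im

/-- The symplectic bilinear form `ω = ω^f ⊕ ω^x` on `ℂ × ℂ × ℝ^k × ℝ^k`:
`ω^f(u, v) = Re (conj u₁ * v₂ − conj v₁ * u₂)` on `ℂ²`, and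
`ω^x((u_θ, u_I), (v_θ, v_I)) = ⟨u_θ, v_I⟩ − ⟨v_θ, u_I⟩` on `ℝ^k × ℝ^k`. -/
noncomputable def omegaFX (k : ℕ)
    (u v : ℂ × ℂ × (Fin k → ℝ) × (Fin k → ℝ)) : ℝ :=
  ((starRingEnd ℂ) u.1 * v.2.1 - (starRingEnd ℂ) v.1 * u.2.1).re +
    ((∑ j, u.2.2.1 j * v.2.2.2 j) - (∑ j, v.2.2.1 j * u.2.2.2 j))

/-- The focus-focus part `ζ` of the normalizing map `ζ_B`:
`Φ(z₁, z₂, θ, I) = (e^{-i⟨θ,a⟩} z₁, e^{-i⟨θ,a⟩} z₂, θ, I + Im(conj z₁ * z₂)·a)`. -/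
noncomputable def zetaFF (k : ℕ) (a : Fin k → ℝ) :
    ℂ × ℂ × (Fin k → ℝ) × (Fin k → ℝ) → ℂ × ℂ × (Fin k → ℝ) × (Fin k → ℝ) :=
  fun p =>
    (Complex.exp (-Complex.I * ((∑ j, p.2.2.1 j * a j) : ℝ)) * p.1,
     Complex.exp (-Complex.I * ((∑ j, p.2.2.1 j * a j) : ℝ)) * p.2.1,
     p.2.2.1,
     p.2.2.2 + q2FF p.1 p.2.1 • a)

namespace ZetaAux

open ContinuousLinearMap Complex

variable (k : ℕ) (a : Fin k → ℝ)

abbrev PP (k : ℕ) := ℂ × ℂ × (Fin k → ℝ) × (Fin k → ℝ)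

noncomputable def slFF : (Fin k → ℝ) →L[ℝ] ℝ :=
  LinearMap.toContinuousLinearMap
    { toFun := fun θ => ∑ j, θ j * a j
      map_add' := fun x y => by simp [add_mul, Finset.sum_add_distrib]
      map_smul' := fun c x => by simp [Finset.mul_sum, mul_assoc] }

lemma slFF_apply (θ : Fin k → ℝ) : slFF k a θ = ∑ j, θ j * a j := rfl

noncomputable def Pθ : PP k →L[ℝ] (Fin k → ℝ) :=
  (fst ℝ (Fin k → ℝ) (Fin k → ℝ)).comp ((snd ℝ ℂ _).comp (snd ℝ ℂ _))

noncomputable def PI : PP k →L[ℝ] (Fin k → ℝ) :=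
  (snd ℝ (Fin k → ℝ) (Fin k → ℝ)).comp ((snd ℝ ℂ _).comp (snd ℝ ℂ _))

noncomputable def P1 : PP k →L[ℝ] ℂ := fst ℝ ℂ _

noncomputable def P2 : PP k →L[ℝ] ℂ := (fst ℝ ℂ _).comp (snd ℝ ℂ _)

noncomputable def G : PP k →L[ℝ] ℂ :=
  (-Complex.I) • (Complex.ofRealCLM.comp ((slFF k a).comp (Pθ k)))

lemma G_apply (u : PP k) : G k a u = -Complex.I * ((∑ j, u.2.2.1 j * a j : ℝ) : ℂ) := by
  simp [G, Pθ, slFF_apply, smul_eq_mul]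

noncomputable def Cj : ℂ →L[ℝ] ℂ := Complex.conjCLE.toContinuousLinearMap

lemma Cj_apply (z : ℂ) : Cj z = (starRingEnd ℂ) z := rfl

noncomputable def Ep (p : PP k) : ℂ :=
  Complex.exp (-Complex.I * ((∑ j, p.2.2.1 j * a j : ℝ) : ℂ))

noncomputable def Dmap (p : PP k) : PP k →L[ℝ] PP k :=
  ((Ep k a p) • P1 k + p.1 • ((Ep k a p) • G k a)).prod
    (((Ep k a p) • P2 k + p.2.1 • ((Ep k a p) • G k a)).prod
      ((Pθ k).prod (PI k +
        (Complex.imCLM.comp ((starRingEnd ℂ) p.1 • P2 k + p.2.1 • ((Cj).comp (P1 k)))).smulRight a)))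

lemma hasFDerivAt_zetaFF (p : PP k) : HasFDerivAt (zetaFF k a) (Dmap k a p) p := by
  have h1 : HasFDerivAt (fun q : PP k => q.1) (P1 k) p := (P1 k).hasFDerivAt
  have h2 : HasFDerivAt (fun q : PP k => q.2.1) (P2 k) p := (P2 k).hasFDerivAt
  have h3 : HasFDerivAt (fun q : PP k => q.2.2.1) (Pθ k) p := (Pθ k).hasFDerivAt
  have h4 : HasFDerivAt (fun q : PP k => q.2.2.2) (PI k) p := (PI k).hasFDerivAt
  have hG : HasFDerivAt (fun q : PP k => -Complex.I * ((∑ j, q.2.2.1 j * a j : ℝ) : ℂ))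
      (G k a) p := by
    have : (fun q : PP k => -Complex.I * ((∑ j, q.2.2.1 j * a j : ℝ) : ℂ)) = ⇑(G k a) := by
      funext q; rw [G_apply]
    rw [this]; exact (G k a).hasFDerivAt
  have hE : HasFDerivAt (fun q : PP k => Complex.exp (-Complex.I * ((∑ j, q.2.2.1 j * a j : ℝ) : ℂ)))
      ((Ep k a p) • G k a) p := hG.cexp
  have hf1 := hE.mul h1
  have hf2 := hE.mul h2
  have hc : HasFDerivAt (fun q : PP k => (starRingEnd ℂ) q.1) ((Cj).comp (P1 k)) p :=
    ((Cj).comp (P1 k)).hasFDerivAt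
  have hmul := hc.mul h2
  have him := Complex.imCLM.hasFDerivAt.comp p hmul
  have hsm := him.smul_const a
  have h4' := h4.add hsm
  exact (HasFDerivAt.prodMk hf1 (HasFDerivAt.prodMk hf2 (HasFDerivAt.prodMk h3 h4')))

lemma fderiv_zetaFF_apply (p u : PP k) :
    fderiv ℝ (zetaFF k a) p u =
      (Ep k a p * (u.1 + (-Complex.I * ((∑ j, u.2.2.1 j * a j : ℝ) : ℂ)) * p.1),
       Ep k a p * (u.2.1 + (-Complex.I * ((∑ j, u.2.2.1 j * a j : ℝ) : ℂ)) * p.2.1),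
       u.2.2.1,
       u.2.2.2 + ((starRingEnd ℂ) p.1 * u.2.1 + p.2.1 * (starRingEnd ℂ) u.1).im • a) := by
  rw [(hasFDerivAt_zetaFF k a p).fderiv]
  simp only [Dmap, ContinuousLinearMap.prod_apply, ContinuousLinearMap.add_apply,
    ContinuousLinearMap.smul_apply, ContinuousLinearMap.coe_comp', Function.comp_apply,
    ContinuousLinearMap.smulRight_apply, G_apply]
  refine Prod.ext ?_ (Prod.ext ?_ (Prod.ext ?_ ?_))
  · simp [P1, smul_eq_mul]; ring
  · simp [P2, smul_eq_mul]; ring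
  · rfl
  · simp [PI, P2, P1, Pθ, Cj_apply, smul_eq_mul]

lemma conj_mul_self_exp (t : ℝ) :
    (starRingEnd ℂ) (Complex.exp (-Complex.I * t)) * Complex.exp (-Complex.I * t) = 1 := by
  rw [← Complex.exp_conj, ← Complex.exp_add]
  have : (starRingEnd ℂ) (-Complex.I * t) + -Complex.I * t = 0 := by
    simp [map_mul, Complex.conj_ofReal]
  rw [this, Complex.exp_zero]

lemma omega_key (w u₁ u₂ v₁ v₂ p₁ p₂ : ℂ) (su sv : ℝ)
    (hw : (starRingEnd ℂ) w * w = 1) :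
    ((starRingEnd ℂ) (w * (u₁ + (-Complex.I * su) * p₁)) * (w * (v₂ + (-Complex.I * sv) * p₂)) -
      (starRingEnd ℂ) (w * (v₁ + (-Complex.I * sv) * p₁)) * (w * (u₂ + (-Complex.I * su) * p₂))).re
    + (((starRingEnd ℂ) p₁ * v₂ + p₂ * (starRingEnd ℂ) v₁).im * su -
       ((starRingEnd ℂ) p₁ * u₂ + p₂ * (starRingEnd ℂ) u₁).im * sv)
    = ((starRingEnd ℂ) u₁ * v₂ - (starRingEnd ℂ) v₁ * u₂).re := by
  have h : ∀ x y : ℂ, (starRingEnd ℂ) (w * x) * (w * y) = (starRingEnd ℂ) x * y := by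
    intro x y
    calc (starRingEnd ℂ) (w * x) * (w * y)
        = ((starRingEnd ℂ) w * w) * ((starRingEnd ℂ) x * y) := by rw [map_mul]; ring
      _ = _ := by rw [hw, one_mul]
  rw [h, h]
  simp only [Complex.add_re, Complex.sub_re, Complex.mul_re, Complex.mul_im, Complex.add_im,
    Complex.sub_im, Complex.conj_re, Complex.conj_im, Complex.I_re, Complex.I_im,
    Complex.ofReal_re, Complex.ofReal_im, Complex.neg_re, Complex.neg_im]
  ring

end ZetaAux

theorem zetaFF_smooth_preserves_q_and_omega (k : ℕ) (a : Fin k → ℝ) :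
    ContDiff ℝ (⊤ : ℕ∞) (zetaFF k a) ∧
    (∀ p : ℂ × ℂ × (Fin k → ℝ) × (Fin k → ℝ),
      q1FF (zetaFF k a p).1 (zetaFF k a p).2.1 = q1FF p.1 p.2.1 ∧
      q2FF (zetaFF k a p).1 (zetaFF k a p).2.1 = q2FF p.1 p.2.1) ∧
    (∀ p u v : ℂ × ℂ × (Fin k → ℝ) × (Fin k → ℝ),
      omegaFX k (fderiv ℝ (zetaFF k a) p u) (fderiv ℝ (zetaFF k a) p v) =
        omegaFX k u v) := by
  refine ⟨?_, ?_, ?_⟩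
  · -- smoothness
    have hz1 : ContDiff ℝ (⊤ : ℕ∞) (fun p : ZetaAux.PP k => p.1) := contDiff_fst
    have hz2 : ContDiff ℝ (⊤ : ℕ∞) (fun p : ZetaAux.PP k => p.2.1) := contDiff_snd.fst
    have hθ : ContDiff ℝ (⊤ : ℕ∞) (fun p : ZetaAux.PP k => p.2.2.1) := contDiff_snd.snd.fst
    have hI : ContDiff ℝ (⊤ : ℕ∞) (fun p : ZetaAux.PP k => p.2.2.2) := contDiff_snd.snd.snd
    have hsum : ContDiff ℝ (⊤ : ℕ∞) (fun p : ZetaAux.PP k => (∑ j, p.2.2.1 j * a j : ℝ)) :=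
      ContDiff.sum fun j _ => (contDiff_pi.mp hθ j).mul contDiff_const
    have hexp : ContDiff ℝ (⊤ : ℕ∞) (fun p : ZetaAux.PP k =>
        Complex.exp (-Complex.I * ((∑ j, p.2.2.1 j * a j : ℝ) : ℂ))) :=
      Complex.contDiff_exp.comp (contDiff_const.mul (Complex.ofRealCLM.contDiff.comp hsum))
    have hq2 : ContDiff ℝ (⊤ : ℕ∞) (fun p : ZetaAux.PP k => q2FF p.1 p.2.1) := by
      unfold q2FF
      exact Complex.imCLM.contDiff.comp ((ZetaAux.Cj.contDiff.comp hz1).mul hz2)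
    unfold zetaFF
    exact ContDiff.prodMk (hexp.mul hz1) (ContDiff.prodMk (hexp.mul hz2)
      (ContDiff.prodMk hθ (hI.add (hq2.smul contDiff_const))))
  · -- q invariance
    intro p
    have hw := ZetaAux.conj_mul_self_exp (∑ j, p.2.2.1 j * a j)
    have h : ∀ x y : ℂ,
        (starRingEnd ℂ) (Complex.exp (-Complex.I * ((∑ j, p.2.2.1 j * a j : ℝ) : ℂ)) * x) *
          (Complex.exp (-Complex.I * ((∑ j, p.2.2.1 j * a j : ℝ) : ℂ)) * y) =
        (starRingEnd ℂ) x * y := by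
      intro x y
      calc _ = ((starRingEnd ℂ) (Complex.exp (-Complex.I * ((∑ j, p.2.2.1 j * a j : ℝ) : ℂ))) *
            Complex.exp (-Complex.I * ((∑ j, p.2.2.1 j * a j : ℝ) : ℂ))) *
            ((starRingEnd ℂ) x * y) := by rw [map_mul]; ring
        _ = _ := by rw [hw, one_mul]
    constructor
    · simp only [zetaFF, q1FF, h]
    · simp only [zetaFF, q2FF, h]
  · -- symplectic
    intro p u v
    rw [ZetaAux.fderiv_zetaFF_apply, ZetaAux.fderiv_zetaFF_apply]
    unfold omegaFX
    have hsum1 : ∀ (x y : Fin k → ℝ) (c : ℝ),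
        (∑ j, x j * (y + c • a) j) = (∑ j, x j * y j) + c * ∑ j, x j * a j := by
      intro x y c
      simp only [Pi.add_apply, Pi.smul_apply, smul_eq_mul, mul_add, Finset.sum_add_distrib]
      congr 1
      rw [Finset.mul_sum]
      exact Finset.sum_congr rfl fun j _ => by ring
    simp only [hsum1]
    have := ZetaAux.omega_key (ZetaAux.Ep k a p) u.1 u.2.1 v.1 v.2.1 p.1 p.2.1
      (∑ j, u.2.2.1 j * a j) (∑ j, v.2.2.1 j * a j)
      (ZetaAux.conj_mul_self_exp (∑ j, p.2.2.1 j * a j))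
    linarith [this]
end

section
/- Fix k ∈ ℕ and b ∈ ℝ^k. Define Ψ : ℂ × ℝ^k × ℝ^k → ℂ × ℝ^k × ℝ^k by Ψ(z, θ, I) = (exp(−i⟨θ, b⟩)·z, θ, I + |z|²·b). Then: (1) Ψ is smooth; (2) |z|² ∘ Ψ = |z|² (the elliptic component is preserved); (3) Ψ is a symplectomorphism for ω = ω̃^e ⊕ ω^x: for every point p and all tangent vectors u, v, ω(DΨ(p)u, DΨ(p)v) = ω(u, v), where DΨ(p) is the Fréchet derivative of Ψ at p. -/
open scoped BigOperators

/-- The symplectic bilinear form `ω = ω̃^e ⊕ ω^x` on `ℂ × ℝ^k × ℝ^k`: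
`ω̃^e(u, v) = 2 Im (u * conj v)` on the elliptic factor `ℂ`, and
`ω^x((u_θ, u_I), (v_θ, v_I)) = ⟨u_θ, v_I⟩ − ⟨v_θ, u_I⟩` on `ℝ^k × ℝ^k`. -/
noncomputable def omegaEX (k : ℕ)
    (u v : ℂ × (Fin k → ℝ) × (Fin k → ℝ)) : ℝ :=
  2 * (u.1 * (starRingEnd ℂ) v.1).im +
    ((∑ j, u.2.1 j * v.2.2 j) - (∑ j, v.2.1 j * u.2.2 j))

/-- The elliptic part `Ψ` of the normalizing map `ζ_B`:
`Ψ(z, θ, I) = (e^{-i⟨θ,b⟩} z, θ, I + |z|²·b)`. -/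
noncomputable def zetaEll (k : ℕ) (b : Fin k → ℝ) :
    ℂ × (Fin k → ℝ) × (Fin k → ℝ) → ℂ × (Fin k → ℝ) × (Fin k → ℝ) :=
  fun p =>
    (Complex.exp (-Complex.I * ((∑ j, p.2.1 j * b j) : ℝ)) * p.1,
     p.2.1,
     p.2.2 + Complex.normSq p.1 • b)

noncomputable def Scl (k : ℕ) (b : Fin k → ℝ) : (Fin k → ℝ) →L[ℝ] ℝ :=
  ∑ j, b j • ContinuousLinearMap.proj j

lemma Scl_apply (k : ℕ) (b : Fin k → ℝ) (θ : Fin k → ℝ) :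
    Scl k b θ = ∑ j, θ j * b j := by
  simp [Scl, mul_comm]

section aux
variable (k : ℕ) (b : Fin k → ℝ)

noncomputable abbrev Pfst : (ℂ × (Fin k → ℝ) × (Fin k → ℝ)) →L[ℝ] ℂ :=
  ContinuousLinearMap.fst ℝ ℂ ((Fin k → ℝ) × (Fin k → ℝ))

noncomputable abbrev Pθ : (ℂ × (Fin k → ℝ) × (Fin k → ℝ)) →L[ℝ] (Fin k → ℝ) :=
  (ContinuousLinearMap.fst ℝ (Fin k → ℝ) (Fin k → ℝ)).comp
    (ContinuousLinearMap.snd ℝ ℂ ((Fin k → ℝ) × (Fin k → ℝ)))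

noncomputable abbrev PI : (ℂ × (Fin k → ℝ) × (Fin k → ℝ)) →L[ℝ] (Fin k → ℝ) :=
  (ContinuousLinearMap.snd ℝ (Fin k → ℝ) (Fin k → ℝ)).comp
    (ContinuousLinearMap.snd ℝ ℂ ((Fin k → ℝ) × (Fin k → ℝ)))

noncomputable abbrev Mcl : (ℂ × (Fin k → ℝ) × (Fin k → ℝ)) →L[ℝ] ℂ :=
  Complex.ofRealCLM.comp ((Scl k b).comp (Pθ k))

noncomputable abbrev reF : (ℂ × (Fin k → ℝ) × (Fin k → ℝ)) →L[ℝ] ℝ :=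
  Complex.reCLM.comp (Pfst k)

noncomputable abbrev imF : (ℂ × (Fin k → ℝ) × (Fin k → ℝ)) →L[ℝ] ℝ :=
  Complex.imCLM.comp (Pfst k)

noncomputable def Dzeta (p : ℂ × (Fin k → ℝ) × (Fin k → ℝ)) :
    (ℂ × (Fin k → ℝ) × (Fin k → ℝ)) →L[ℝ] (ℂ × (Fin k → ℝ) × (Fin k → ℝ)) :=
  ((Complex.exp (-Complex.I * ((∑ j, p.2.1 j * b j : ℝ))) • Pfst k +
      p.1 • (Complex.exp (-Complex.I * ((∑ j, p.2.1 j * b j : ℝ))) •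
        ((-Complex.I) • Mcl k b)))).prod
    ((Pθ k).prod
      ((PI k) + ((p.1.re • reF k + p.1.re • reF k) +
        (p.1.im • imF k + p.1.im • imF k)).smulRight b))

lemma hasFDerivAt_zetaEll (p : ℂ × (Fin k → ℝ) × (Fin k → ℝ)) :
    HasFDerivAt (zetaEll k b) (Dzeta k b p) p := by
  have hM : HasFDerivAt (fun q : ℂ × (Fin k → ℝ) × (Fin k → ℝ) =>
      (((∑ j, q.2.1 j * b j : ℝ) : ℂ))) (Mcl k b) p := by
    have := (Mcl k b).hasFDerivAt (x := p)
    convert this using 2 with q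
    simp [Scl_apply]
  have hg : HasFDerivAt (fun q : ℂ × (Fin k → ℝ) × (Fin k → ℝ) =>
      -Complex.I * (((∑ j, q.2.1 j * b j : ℝ) : ℂ))) ((-Complex.I) • Mcl k b) p :=
    hM.const_mul _
  have hexp := hg.cexp
  have h1 := hexp.mul ((Pfst k).hasFDerivAt (x := p))
  have hre : HasFDerivAt (fun q : ℂ × (Fin k → ℝ) × (Fin k → ℝ) => q.1.re)
      (reF k) p := (reF k).hasFDerivAt
  have him : HasFDerivAt (fun q : ℂ × (Fin k → ℝ) × (Fin k → ℝ) => q.1.im)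
      (imF k) p := (imF k).hasFDerivAt
  have hn : HasFDerivAt (fun q : ℂ × (Fin k → ℝ) × (Fin k → ℝ) => Complex.normSq q.1)
      ((p.1.re • reF k + p.1.re • reF k) + (p.1.im • imF k + p.1.im • imF k)) p := by
    have := (hre.mul hre).add (him.mul him)
    convert this using 2 with q
    case e'_11 => exact Complex.normSq_apply _
    all_goals rfl
  have h3 := ((PI k).hasFDerivAt (x := p)).add (hn.smul_const b)
  have := h1.prodMk (((Pθ k).hasFDerivAt (x := p)).prodMk h3)
  exact this

lemma omega_invariant (p u v : ℂ × (Fin k → ℝ) × (Fin k → ℝ)) :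
    omegaEX k (Dzeta k b p u) (Dzeta k b p v) = omegaEX k u v := by
  simp only [omegaEX, Dzeta, ContinuousLinearMap.prod_apply, ContinuousLinearMap.add_apply,
    ContinuousLinearMap.smul_apply, ContinuousLinearMap.coe_comp', Function.comp_apply,
    ContinuousLinearMap.coe_fst', ContinuousLinearMap.coe_snd',
    ContinuousLinearMap.smulRight_apply, Complex.ofRealCLM_apply, Complex.reCLM_apply,
    Complex.imCLM_apply, Scl_apply, smul_eq_mul, Pi.add_apply, Pi.smul_apply]
  set E := Complex.exp (-Complex.I * ((∑ j, p.2.1 j * b j : ℝ))) with hEdef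
  have hE : (starRingEnd ℂ) E * E = 1 := by
    rw [hEdef, ← Complex.exp_conj, ← Complex.exp_add,
      show (starRingEnd ℂ) (-Complex.I * ((∑ j, p.2.1 j * b j : ℝ))) +
        (-Complex.I * ((∑ j, p.2.1 j * b j : ℝ))) = 0 by
          simp [map_mul, Complex.conj_ofReal], Complex.exp_zero]
  have factor : ∀ X Y : ℂ, ((E * X) * (starRingEnd ℂ) (E * Y)) = X * (starRingEnd ℂ) Y := by
    intro X Y
    have h : (E * X) * ((starRingEnd ℂ) E * (starRingEnd ℂ) Y) =
        ((starRingEnd ℂ) E * E) * (X * (starRingEnd ℂ) Y) := by ring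
    rw [map_mul, h, hE, one_mul]
  have comb : ∀ (w : ℂ) (a : ℝ), E * w + p.1 * (E * (-Complex.I * (a : ℂ))) =
      E * (w - Complex.I * (a : ℂ) * p.1) := by intro w a; ring
  rw [comb, comb, factor]
  simp only [mul_add, add_mul, Finset.sum_add_distrib, mul_comm, mul_left_comm, ← Finset.mul_sum]
  set A := ∑ j, u.2.1 j * b j
  set C := ∑ j, v.2.1 j * b j
  simp only [Complex.mul_im, Complex.sub_re, Complex.sub_im, Complex.mul_re,
    Complex.conj_re, Complex.conj_im, Complex.I_re, Complex.I_im, Complex.ofReal_re,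
    Complex.ofReal_im]
  ring_nf
  simp only [mul_assoc, ← Finset.mul_sum]
  ring

lemma zetaEll_contDiff : ContDiff ℝ (⊤ : ℕ∞) (zetaEll k b) := by
  unfold zetaEll
  apply ContDiff.prodMk
  · refine ContDiff.mul (ContDiff.cexp ?_) contDiff_fst
    refine contDiff_const.mul ?_
    have h := (Complex.ofRealCLM.comp ((Scl k b).comp (Pθ k))).contDiff (n := (⊤ : ℕ∞))
    convert h using 2 with q
    case e'_10 => simp [Scl_apply]
    all_goals rfl
  apply ContDiff.prodMk
  · exact contDiff_snd.fst
  · refine ContDiff.add contDiff_snd.snd (ContDiff.fun_smul ?_ contDiff_const)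
    have : ContDiff ℝ (⊤ : ℕ∞) (fun q : ℂ × (Fin k → ℝ) × (Fin k → ℝ) =>
        q.1.re * q.1.re + q.1.im * q.1.im) :=
      ((Complex.reCLM.contDiff.comp contDiff_fst).mul
        (Complex.reCLM.contDiff.comp contDiff_fst)).add
      ((Complex.imCLM.contDiff.comp contDiff_fst).mul
        (Complex.imCLM.contDiff.comp contDiff_fst))
    convert this using 2 with q
    case e'_10 => exact Complex.normSq_apply _
    all_goals rfl

end aux

theorem zetaEll_smooth_preserves_elliptic_and_omega (k : ℕ) (b : Fin k → ℝ) :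
    ContDiff ℝ (⊤ : ℕ∞) (zetaEll k b) ∧
    (∀ p : ℂ × (Fin k → ℝ) × (Fin k → ℝ),
      Complex.normSq (zetaEll k b p).1 = Complex.normSq p.1) ∧
    (∀ p u v : ℂ × (Fin k → ℝ) × (Fin k → ℝ),
      omegaEX k (fderiv ℝ (zetaEll k b) p u) (fderiv ℝ (zetaEll k b) p v) =
        omegaEX k u v) := by
  refine ⟨zetaEll_contDiff k b, ?_, ?_⟩
  · intro p
    simp [zetaEll, Complex.normSq_mul, Complex.normSq_eq_norm_sq, Complex.norm_exp, Complex.re_sum]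
  · intro p u v
    rw [(hasFDerivAt_zetaEll k b p).fderiv]
    exact omega_invariant k b p u v
end
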